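/- Let D be a digraph and let u and v be two non-sink vertices of D that are true twins in D (i.e., N⁺(u) = N⁺(v) and N⁻(u) = N⁻(v)). Then u and v are true twins in the (1,2)-step competition graph C_{1,2}(D), i.e., they have the same closed neighborhood in C_{1,2}(D). -/

import Mathlib

/-- Adjacency in the (1,2)-step competition graph `C_{1,2}(D)` of the (simple) digraph `D`
with arc relation `A`: there is a vertex `w` distinct from `u` and `v` such that either
(`d_{D-v}(u,w) ≤ 1` and `d_{D-u}(v,w) ≤ 2`) or (`d_{D-u}(v,w) ≤ 1` and `d_{D-v}(u,w) ≤ 2`). -/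
def CompAdj {V : Type*} (A : V → V → Prop) (u v : V) : Prop :=
  u ≠ v ∧ ∃ w, w ≠ u ∧ w ≠ v ∧
    ((A u w ∧ (A v w ∨ ∃ z, z ≠ u ∧ A v z ∧ A z w)) ∨
     (A v w ∧ (A u w ∨ ∃ z, z ≠ v ∧ A u z ∧ A z w)))

/-- The (1,2)-step competition graph `C_{1,2}(D)` of the digraph with arc relation `A`. -/
def compGraph {V : Type*} (A : V → V → Prop) : SimpleGraph V where
  Adj := CompAdj A
  symm := by
    refine ⟨?_⟩
    rintro u v ⟨hne, w, h1, h2, h3⟩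
    exact ⟨hne.symm, w, h2, h1, h3.symm⟩
  loopless := by refine ⟨?_⟩; rintro u ⟨hne, -⟩; exact hne rfl

/-- Vertices `u` and `v` `(1,2)`-compete in the digraph with arc relation `A`: there is a
vertex `w` distinct from `u` and `v` such that either (`u → w` and there is a directed path
of length 2 from `v` to `w` not traversing `u`) or vice versa. -/
def OneTwoCompete {V : Type*} (A : V → V → Prop) (u v : V) : Prop :=
  ∃ w, w ≠ u ∧ w ≠ v ∧
    ((A u w ∧ ∃ z, z ≠ u ∧ A v z ∧ A z w) ∨
     (A v w ∧ ∃ z, z ≠ v ∧ A u z ∧ A z w))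

/-- `A` is an orientation of the complete multipartite graph whose parts are the fibres of
`p : V → ι`: no arcs within a part, and exactly one arc between any two vertices in
different parts. -/
def IsCompleteMultipartiteOrientation {V ι : Type*} (A : V → V → Prop) (p : V → ι) : Prop :=
  (∀ u v : V, p u = p v → ¬ A u v) ∧
  ∀ u v : V, p u ≠ p v → (A u v ∨ A v u) ∧ ¬ (A u v ∧ A v u)

/-- A multipartite tournament: an orientation of a complete `k`-partite graph with `k ≥ 3`,
whose partite sets are the (nonempty) fibres of `p : V → ι`. -/
def IsMultipartiteTournament {V ι : Type*} [Fintype ι] (A : V → V → Prop) (p : V → ι) : Prop :=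
  Function.Surjective p ∧ 3 ≤ Fintype.card ι ∧ IsCompleteMultipartiteOrientation A p

/-- A multipartite tournament is tight if every partite set is a clique in `C_{1,2}(D)`. -/
def IsTight {V ι : Type*} (A : V → V → Prop) (p : V → ι) : Prop :=
  ∀ u v : V, u ≠ v → p u = p v → CompAdj A u v

/-- A tournament: an orientation of a complete graph. -/
def IsTournament {V : Type*} (A : V → V → Prop) : Prop :=
  (∀ u, ¬ A u u) ∧ ∀ u v : V, u ≠ v → (A u v ∨ A v u) ∧ ¬ (A u v ∧ A v u)

/-!
Since `u` and `v` have the same in- and out-neighbourhoods, the transposition of `u` and `v`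
is an automorphism of `D`, hence of `C_{1,2}(D)`; so `u` and `v` have the same neighbours
outside `{u, v}` in `C_{1,2}(D)`. A common out-neighbour of `u` and `v` makes them adjacent.
-/

open Equiv

lemma SimpleGraph.insert_neighborSet_eq_of_adj {V : Type*} (G : SimpleGraph V) {u v : V}
    (huv : G.Adj u v) (h : ∀ x, x ≠ u → x ≠ v → (G.Adj u x ↔ G.Adj v x)) :
    insert u (G.neighborSet u) = insert v (G.neighborSet v) := by
  ext x
  simp only [Set.mem_insert_iff, SimpleGraph.mem_neighborSet]
  rcases eq_or_ne x u with rfl | hxu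
  · simp [huv.symm]
  rcases eq_or_ne x v with rfl | hxv
  · simp [huv]
  simp [hxu, hxv, h x hxu hxv]

lemma RelIso.compAdj_apply_iff {V W : Type*} {A : V → V → Prop} {B : W → W → Prop}
    (e : A ≃r B) {a b : V} : CompAdj B (e a) (e b) ↔ CompAdj A a b := by
  simp only [CompAdj, e.surjective.exists, e.map_rel_iff, e.injective.ne_iff]

section Twins

variable {V : Type*} {A : V → V → Prop} {u v : V}

lemma rel_swap_left_iff [DecidableEq V] (hout : ∀ w, A u w ↔ A v w) (a c : V) :
    A (swap u v a) c ↔ A a c := by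
  rcases eq_or_ne a u with rfl | hau
  · rw [swap_apply_left]; exact (hout c).symm
  rcases eq_or_ne a v with rfl | hav
  · rw [swap_apply_right]; exact hout c
  rw [swap_apply_of_ne_of_ne hau hav]

lemma rel_swap_right_iff [DecidableEq V] (hin : ∀ w, A w u ↔ A w v) (c b : V) :
    A c (swap u v b) ↔ A c b :=
  rel_swap_left_iff (A := flip A) hin b c

def swapRelIsoOfTwins [DecidableEq V] (hout : ∀ w, A u w ↔ A v w) (hin : ∀ w, A w u ↔ A w v) :
    A ≃r A where
  toEquiv := swap u v
  map_rel_iff' := (rel_swap_left_iff hout _ _).trans (rel_swap_right_iff hin _ _)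

lemma compAdj_iff_of_twins (hout : ∀ w, A u w ↔ A v w) (hin : ∀ w, A w u ↔ A w v) {x : V}
    (hxu : x ≠ u) (hxv : x ≠ v) : CompAdj A u x ↔ CompAdj A v x := by
  classical
  have h : CompAdj A (swap u v u) (swap u v x) ↔ CompAdj A u x :=
    (swapRelIsoOfTwins hout hin).compAdj_apply_iff
  rwa [swap_apply_left, swap_apply_of_ne_of_ne hxu hxv, Iff.comm] at h

lemma compAdj_of_forall_rel_iff (hA : Irreflexive A) (huv : u ≠ v) (hu : ∃ w, A u w)
    (hout : ∀ w, A u w ↔ A v w) : CompAdj A u v := by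
  obtain ⟨w, huw⟩ := hu
  have hvw := (hout w).mp huw
  exact ⟨huv, w, fun h => hA u (h ▸ huw), fun h => hA v (h ▸ hvw), .inl ⟨huw, .inl hvw⟩⟩

end Twins

theorem stmt9_general {V : Type*} (A : V → V → Prop) (hA : Irreflexive A)
    (u v : V) (huv : u ≠ v) (hu : ∃ w, A u w)
    (hout : ∀ w, A u w ↔ A v w) (hin : ∀ w, A w u ↔ A w v) :
    insert u ((compGraph A).neighborSet u) = insert v ((compGraph A).neighborSet v) :=
  (compGraph A).insert_neighborSet_eq_of_adj (compAdj_of_forall_rel_iff hA huv hu hout)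
    fun _ hxu hxv => compAdj_iff_of_twins hout hin hxu hxv

/-- Let `D` be a digraph and let `u` and `v` be two non-sink vertices of `D`
that are true twins in `D` (same out-neighborhood and same in-neighborhood). Then `u` and
`v` are true twins in `C_{1,2}(D)`, i.e., they have the same closed neighborhood in
`C_{1,2}(D)`. -/
theorem stmt9 {V : Type*} [Fintype V] (A : V → V → Prop) (hA : Irreflexive A)
    (u v : V) (huv : u ≠ v) (hu : ∃ w, A u w) (hv : ∃ w, A v w)
    (hout : ∀ w, A u w ↔ A v w) (hin : ∀ w, A w u ↔ A w v) :
    insert u ((compGraph A).neighborSet u) = insert v ((compGraph A).neighborSet v) :=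
  stmt9_general A hA u v huv hu hout hin
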